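/- arXiv:1301.1568 — 7 statements merged into one kernel-verified Lean document; each statement's English description precedes it below -/
import Mathlib

section
/- Let S be a semigroup with zero. Then the conjugacy relation ~c is an equivalence relation on S (it is reflexive, symmetric, and transitive). -/
/-!
Conjugacy `~c` in a semigroup with zero (Araújo–Konieczny–Malheiro).
`S¹` is modelled by `WithOne S`.
-/

namespace ConjPaper

open Classical

variable {S : Type*} [SemigroupWithZero S]

/-- The left principal ideal `S¹a = {a} ∪ Sa` generated by `a`. -/
def leftIdeal (a : S) : Set S := {b | b = a ∨ ∃ m : S, b = m * a}

/-- The set `𝔓(a)`: for `a ≠ 0`, all `g ∈ S` such that `(ma)g ≠ 0` for every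
nonzero element `ma` of `S¹a`; and `𝔓(0) = {0}`. -/
noncomputable def Pfrak (a : S) : Set S :=
  if a = 0 then {0} else {g | ∀ b ∈ leftIdeal a, b ≠ 0 → b * g ≠ 0}

/-- `𝔓¹(a) = 𝔓(a) ∪ {1}`, viewed inside `S¹ = WithOne S`. -/
def Pfrak1 (a : S) : Set (WithOne S) :=
  (fun s : S => (s : WithOne S)) '' Pfrak a ∪ {1}

/-- The conjugacy relation `a ~c b`: there are `g ∈ 𝔓¹(a)` and `h ∈ 𝔓¹(b)`
with `ag = gb` and `bh = ha` (computed in `S¹`). -/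
def ConjC (a b : S) : Prop :=
  ∃ g ∈ Pfrak1 a, ∃ h ∈ Pfrak1 b,
    (a : WithOne S) * g = g * (b : WithOne S) ∧
    (b : WithOne S) * h = h * (a : WithOne S)

lemma one_mem_Pfrak1 (a : S) : (1 : WithOne S) ∈ Pfrak1 a := Or.inr rfl

/-- Key lemma: if `ag = gb` with `g ∈ 𝔓¹(a)` and `p ∈ 𝔓¹(b)`, then `gp ∈ 𝔓¹(a)`. -/
lemma mul_mem_Pfrak1 {a b : S} {g p : WithOne S} (hg : g ∈ Pfrak1 a) (hp : p ∈ Pfrak1 b)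
    (hab : (a : WithOne S) * g = g * (b : WithOne S)) : g * p ∈ Pfrak1 a := by
  rcases hg with ⟨g', hg', rfl⟩ | rfl
  · rcases hp with ⟨p', hp', rfl⟩ | rfl
    · -- g, p both in S
      rw [← WithOne.coe_mul] at hab ⊢
      have hab' : a * g' = g' * b := WithOne.coe_inj.mp hab
      left
      refine ⟨g' * p', ?_, rfl⟩
      by_cases ha : a = 0
      · -- then g' = 0
        simp only [Pfrak, ha, if_true, Set.mem_singleton_iff] at hg' ⊢
        simp [hg']
      · -- a ≠ 0, show b ≠ 0
        simp only [Pfrak, ha, if_false, Set.mem_setOf_eq] at hg' ⊢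
        by_cases hb : b = 0
        · exfalso
          have := hg' a (Or.inl rfl) ha
          rw [hab', hb, mul_zero] at this
          exact this rfl
        · simp only [Pfrak, hb, if_false, Set.mem_setOf_eq] at hp'
          intro x hx hx0
          have hxg : x * g' ≠ 0 := hg' x hx hx0
          have hxgb : x * g' ∈ leftIdeal b := by
            rcases hx with rfl | ⟨m, rfl⟩
            · rw [hab']; exact Or.inr ⟨g', rfl⟩
            · refine Or.inr ⟨m * g', ?_⟩
              rw [mul_assoc, hab', ← mul_assoc]
          have := hp' (x * g') hxgb hxg
          rwa [mul_assoc] at this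
    · rw [mul_one]; exact Or.inl ⟨g', hg', rfl⟩
  · rw [one_mul] at hab ⊢
    have : a = b := WithOne.coe_inj.mp hab
    subst this
    exact hp

/-- In a semigroup with zero, `~c` is an equivalence relation. -/
theorem conjC_equivalence : Equivalence (ConjC (S := S)) := by
  constructor
  · intro a
    exact ⟨1, one_mem_Pfrak1 a, 1, one_mem_Pfrak1 a, by rw [mul_one, one_mul],
      by rw [mul_one, one_mul]⟩
  · rintro a b ⟨g, hg, h, hh, h1, h2⟩
    exact ⟨h, hh, g, hg, h2, h1⟩
  · rintro a b c ⟨g, hg, h, hh, h1, h2⟩ ⟨p, hp, q, hq, h3, h4⟩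
    refine ⟨g * p, mul_mem_Pfrak1 hg hp h1, q * h, mul_mem_Pfrak1 hq hh h4, ?_, ?_⟩
    · rw [← mul_assoc, h1, mul_assoc, h3, ← mul_assoc]
    · rw [← mul_assoc, h4, mul_assoc, h2, ← mul_assoc]

end ConjPaper
end

section
/- Let S be a semigroup with zero 0. Then the ~c-conjugacy class of 0 is {0}; that is, for every a ∈ S, a ~c 0 if and only if a = 0. -/
/-!
Conjugacy `~c` in a semigroup with zero (Araújo–Konieczny–Malheiro).
`S¹` is modelled by `WithOne S`.
-/

namespace ConjPaper

open Classical

variable {S : Type*} [SemigroupWithZero S]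

/-- In a semigroup with zero, the conjugacy class of `0` is `{0}`:
for every `a`, `a ~c 0` iff `a = 0`. -/
theorem conjC_zero_class (a : S) : ConjC a 0 ↔ a = 0 := by
  constructor
  · rintro ⟨g, hg, h, hh, hag, hha⟩
    by_contra ha
    rcases hg with ⟨g', hg', rfl⟩ | hg1
    · have hPa : ∀ b ∈ leftIdeal a, b ≠ 0 → b * g' ≠ 0 := by
        simpa [Pfrak, ha] using hg'
      apply hPa a (Or.inl rfl) ha
      have h1 : ((a * g' : S) : WithOne S) = ((g' * 0 : S) : WithOne S) := by
        push_cast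
        exact hag
      have h2 : a * g' = g' * 0 := WithOne.coe_inj.mp h1
      simpa using h2
    · rw [Set.mem_singleton_iff] at hg1
      subst hg1
      apply ha
      have : ((a : S) : WithOne S) = ((0 : S) : WithOne S) := by simpa using hag
      exact WithOne.coe_inj.mp this
  · rintro rfl
    exact ⟨1, Or.inr rfl, 1, Or.inr rfl, by simp, by simp⟩

end ConjPaper
end

section
/- Let S be a semigroup without a zero element (there is no z ∈ S with za = z and az = z for all a ∈ S). Then the relation ~o is equal to the identity relation on S (a ~o b implies a = b, and each a ~o a) if and only if S is commutative and cancellative (both left and right cancellative). -/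
namespace ConjPaper

/-- `a ~o b` iff `ag = gb` and `bh = ha` for some `g, h ∈ S¹ = WithOne S`. -/
def ConjO {T : Type*} [Semigroup T] (a b : T) : Prop :=
  ∃ g h : WithOne T,
    (a : WithOne T) * g = g * (b : WithOne T) ∧
    (b : WithOne T) * h = h * (a : WithOne T)

section

variable {T : Type*}

theorem conjO_refl [Semigroup T] (a : T) : ConjO a a :=
  ⟨1, 1, by simp, by simp⟩

theorem conjO_mul_comm [Semigroup T] (a b : T) : ConjO (a * b) (b * a) :=
  ⟨a, b, by norm_cast; rw [mul_assoc], by norm_cast; rw [mul_assoc]⟩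

theorem conjO_of_mul_left_eq [Semigroup T] {a b c : T} (hb : Commute a b) (hc : Commute a c)
    (h : a * b = a * c) : ConjO b c :=
  ⟨a, a, by norm_cast; rw [← hb.eq, h], by norm_cast; rw [← hc.eq, h]⟩

theorem ConjO.eq [CommSemigroup T] [IsRightCancelMul T] {a b : T} (h : ConjO a b) : a = b := by
  obtain ⟨g, -, hg, -⟩ := h
  induction g using WithOne.recOneCoe with
  | one => simpa using hg
  | coe x =>
    norm_cast at hg
    exact mul_right_cancel (hg.trans (mul_comm x b))

end

theorem conjO_eq_diagonal_iff_general (S : Type*) [Semigroup S] :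
    ((∀ a b : S, ConjO a b → a = b) ∧ (∀ a : S, ConjO a a)) ↔
      ((∀ a b : S, a * b = b * a) ∧
        (∀ a b c : S, a * b = a * c → b = c) ∧
        (∀ a b c : S, b * a = c * a → b = c)) := by
  constructor
  · rintro ⟨hdiag, -⟩
    have comm : ∀ a b : S, a * b = b * a := fun a b => hdiag _ _ (conjO_mul_comm a b)
    have lcancel : ∀ a b c : S, a * b = a * c → b = c := fun a b c h =>
      hdiag _ _ (conjO_of_mul_left_eq (comm a b) (comm a c) h)
    exact ⟨comm, lcancel, fun a b c h => lcancel a b c (by rw [comm a b, comm a c, h])⟩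
  · rintro ⟨comm, -, rcancel⟩
    let _ : CommSemigroup S := { mul_comm := comm }
    have : IsRightCancelMul S := ⟨fun a _ _ h => rcancel a _ _ h⟩
    exact ⟨fun _ _ h => h.eq, conjO_refl⟩

/-- Let `S` be a semigroup without a zero element. Then `~o` is the
identity relation on `S` (i.e. `a ~o b → a = b`, and `a ~o a` for all `a`) if and only
if `S` is commutative and cancellative. -/
theorem conjO_eq_diagonal_iff (S : Type*) [Semigroup S]
    (hnz : ¬∃ z : S, ∀ a : S, z * a = z ∧ a * z = z) :
    ((∀ a b : S, ConjO a b → a = b) ∧ (∀ a : S, ConjO a a)) ↔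
      ((∀ a b : S, a * b = b * a) ∧
        (∀ a b c : S, a * b = a * c → b = c) ∧
        (∀ a b c : S, b * a = c * a → b = c)) :=
  conjO_eq_diagonal_iff_general S

end ConjPaper
end

section
/- Let α ∈ P(X) with α ≠ 0. Then there exists a unique set C of pairwise completely disjoint, connected partial transformations, each contained in α, such that α is the join of the elements of C. -/
namespace ConjPaper

open Classical

/-- Partial transformations of `X`. -/
abbrev PT (X : Type*) := X → Option X

variable {X : Type*}

/-- Left-to-right composition: `x(αφ) = (xα)φ`. -/
def pcomp (α φ : PT X) : PT X := fun x => (α x).bind φ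

/-- The zero of `P(X)`: the empty transformation. -/
def pzero : PT X := fun _ => none

/-- The identity of `P(X)`. -/
def pid : PT X := fun x => some x

/-- The domain of a partial transformation. -/
def pdom (α : PT X) : Set X := {x | α x ≠ none}

/-- The image of a partial transformation. -/
def pim (α : PT X) : Set X := {y | ∃ x, α x = some y}

/-- The span: `dom(α) ∪ im(α)`. -/
def pspan (α : PT X) : Set X := pdom α ∪ pim α

/-- Iterates `γ^k` of a partial transformation (`γ^0 = id`). -/
def pit (α : PT X) : ℕ → PT X
  | 0 => pid
  | n + 1 => pcomp (pit α n) α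

/-- `φ` is a restrictive partial homomorphism (rp-homomorphism) from `Γ(α)` to `Γ(β)`:
(a) every arc `x → y` of `Γ(α)` has `x, y ∈ dom(φ)` and `xφ → yφ` an arc of `Γ(β)`;
(b) if `x` is terminal in `Γ(α)` and `x ∈ dom(φ)`, then `xφ` is terminal in `Γ(β)`. -/
def IsRpHom (α β φ : PT X) : Prop :=
  (∀ x y, α x = some y →
    ∃ x' y', φ x = some x' ∧ φ y = some y' ∧ β x' = some y') ∧
  (∀ x x', α x = none → φ x = some x' → β x' = none)

/-- `γ` is connected: `γ ≠ 0` and any two points of `span(γ)` reach a common point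
under nonnegative iterates of `γ`. -/
def Connected (γ : PT X) : Prop :=
  γ ≠ pzero ∧ ∀ x ∈ pspan γ, ∀ y ∈ pspan γ,
    ∃ k m z, pit γ k x = some z ∧ pit γ m y = some z

/-! Call two points joinable under `α` when their forward orbits meet. This is an equivalence
relation, and the components of `α` are its restrictions to the classes of the points of
`dom α`. Conversely, in any decomposition as in the theorem, disjointness of spans forces each
member `δ` to agree with `α` on all of `span δ`, so `δ` follows the whole forward orbit of each
of its points and hence contains the restriction of `α` to a full class; connectedness of `δ`
gives the reverse inclusion. -/

lemma pit_succ_apply (α : PT X) (n : ℕ) (x : X) :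
    pit α (n + 1) x = (pit α n x).bind α := rfl

lemma pit_add_apply_of_eq_some {α : PT X} {a : ℕ} {x y : X} (h : pit α a x = some y)
    (b : ℕ) : pit α (a + b) x = pit α b y := by
  induction b with
  | zero => exact h
  | succ b ih => rw [← add_assoc, pit_succ_apply, ih, pit_succ_apply]

lemma pit_apply_eq_some_of_le {α δ : PT X} (hle : ∀ x y, δ x = some y → α x = some y)
    {k : ℕ} {u z : X} (h : pit δ k u = some z) : pit α k u = some z := by
  induction k generalizing z with
  | zero => exact h
  | succ k ih =>
    obtain ⟨w, hw, hwz⟩ := Option.bind_eq_some_iff.mp h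
    rw [pit_succ_apply, ih hw, Option.bind_some]
    exact hle w z hwz

lemma mem_pspan_of_pit_apply_eq_some {α : PT X} {k : ℕ} {u z : X}
    (h : pit α k u = some z) (hu : u ∈ pspan α) : z ∈ pspan α := by
  cases k with
  | zero => cases h; exact hu
  | succ k =>
    obtain ⟨w, -, hwz⟩ := Option.bind_eq_some_iff.mp h
    exact Or.inr ⟨w, hwz⟩

def Joinable (α : PT X) (u v : X) : Prop :=
  ∃ k m z, pit α k u = some z ∧ pit α m v = some z

namespace Joinable

variable {α : PT X} {u v w : X}

lemma refl (α : PT X) (u : X) : Joinable α u u := ⟨0, 0, u, rfl, rfl⟩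

lemma symm (h : Joinable α u v) : Joinable α v u :=
  let ⟨k, m, z, hu, hv⟩ := h
  ⟨m, k, z, hv, hu⟩

lemma trans (h : Joinable α u v) (h' : Joinable α v w) : Joinable α u w := by
  obtain ⟨k, m, z, huz, hvz⟩ := h
  obtain ⟨k', m', z', hvz', hwz'⟩ := h'
  rcases le_total m k' with hle | hle
  · obtain ⟨d, rfl⟩ := Nat.exists_eq_add_of_le hle
    rw [pit_add_apply_of_eq_some hvz] at hvz'
    exact ⟨k + d, m', z', by rwa [pit_add_apply_of_eq_some huz], hwz'⟩
  · obtain ⟨d, rfl⟩ := Nat.exists_eq_add_of_le hle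
    rw [pit_add_apply_of_eq_some hvz'] at hvz
    exact ⟨k, m' + d, z, huz, by rwa [pit_add_apply_of_eq_some hwz']⟩

lemma of_pit_apply_eq_some {k : ℕ} (h : pit α k u = some v) : Joinable α v u :=
  ⟨0, k, v, rfl, h⟩

lemma mono {δ : PT X} (hle : ∀ x y, δ x = some y → α x = some y) (h : Joinable δ u v) :
    Joinable α u v :=
  let ⟨k, m, z, hu, hv⟩ := h
  ⟨k, m, z, pit_apply_eq_some_of_le hle hu, pit_apply_eq_some_of_le hle hv⟩

end Joinable

noncomputable def component (α : PT X) (x : X) : PT X :=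
  fun u => if Joinable α u x then α u else none

section Component

variable {α : PT X} {u v x y : X}

lemma component_apply_of_joinable (h : Joinable α u x) : component α x u = α u :=
  if_pos h

lemma component_apply_of_not_joinable (h : ¬ Joinable α u x) : component α x u = none :=
  if_neg h

lemma apply_eq_some_of_component_apply_eq_some (h : component α x u = some v) :
    α u = some v := by
  by_cases hux : Joinable α u x
  · rwa [component_apply_of_joinable hux] at h
  · simp [component_apply_of_not_joinable hux] at h

lemma joinable_of_mem_pspan_component (h : u ∈ pspan (component α x)) : Joinable α u x := by
  by_contra hux
  rcases h with hdom | ⟨w, hw⟩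
  · exact hdom (component_apply_of_not_joinable hux)
  · have hwx : Joinable α w x := by
      by_contra hwx
      simp [component_apply_of_not_joinable hwx] at hw
    rw [component_apply_of_joinable hwx] at hw
    exact hux ((Joinable.of_pit_apply_eq_some (k := 1) hw).trans hwx)

lemma component_eq_of_joinable (h : Joinable α x y) : component α x = component α y := by
  funext u
  by_cases hux : Joinable α u x
  · rw [component_apply_of_joinable hux, component_apply_of_joinable (hux.trans h)]
  · rw [component_apply_of_not_joinable hux,
      component_apply_of_not_joinable fun huy => hux (huy.trans h.symm)]

lemma pit_component_apply (h : Joinable α u x) (k : ℕ) :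
    pit (component α x) k u = pit α k u := by
  induction k with
  | zero => rfl
  | succ k ih =>
    rw [pit_succ_apply, pit_succ_apply, ih]
    cases hk : pit α k u with
    | none => rfl
    | some w => exact component_apply_of_joinable ((Joinable.of_pit_apply_eq_some hk).trans h)

lemma connected_component (hx : x ∈ pdom α) : Connected (component α x) := by
  refine ⟨fun h0 => hx ?_, fun u hu v hv => ?_⟩
  · rw [← component_apply_of_joinable (Joinable.refl α x), h0]; rfl
  · have hux := joinable_of_mem_pspan_component hu
    have hvx := joinable_of_mem_pspan_component hv
    obtain ⟨k, m, z, hk, hm⟩ := hux.trans hvx.symm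
    exact ⟨k, m, z, by rwa [pit_component_apply hux], by rwa [pit_component_apply hvx]⟩

end Component

lemma Connected.exists_mem_pdom {γ : PT X} (h : Connected γ) : ∃ x, x ∈ pdom γ := by
  by_contra! hγ
  exact h.1 (funext fun x => not_not.mp (hγ x))

def IsConnectedDecomposition (α : PT X) (C : Set (PT X)) : Prop :=
  (∀ γ ∈ C, Connected γ ∧ ∀ x y, γ x = some y → α x = some y) ∧
  (∀ γ ∈ C, ∀ δ ∈ C, γ ≠ δ → pspan γ ∩ pspan δ = ∅) ∧
  (∀ x y, α x = some y ↔ ∃ γ ∈ C, γ x = some y)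

noncomputable def components (α : PT X) : Set (PT X) :=
  component α '' pdom α

lemma isConnectedDecomposition_components (α : PT X) :
    IsConnectedDecomposition α (components α) := by
  refine ⟨?_, ?_, fun x y => ⟨fun h => ?_, ?_⟩⟩
  · rintro _ ⟨x, hx, rfl⟩
    exact ⟨connected_component hx, fun _ _ => apply_eq_some_of_component_apply_eq_some⟩
  · rintro _ ⟨x, -, rfl⟩ _ ⟨y, -, rfl⟩ hne
    refine Set.eq_empty_of_forall_notMem fun u ⟨hux, huy⟩ => hne ?_
    exact component_eq_of_joinable
      ((joinable_of_mem_pspan_component hux).symm.trans (joinable_of_mem_pspan_component huy))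
  · exact ⟨component α x, ⟨x, by simp [pdom, h], rfl⟩,
      by rwa [component_apply_of_joinable (Joinable.refl α x)]⟩
  · rintro ⟨_, ⟨z, -, rfl⟩, h⟩
    exact apply_eq_some_of_component_apply_eq_some h

namespace IsConnectedDecomposition

variable {α γ δ : PT X} {C : Set (PT X)}

lemma eq_of_mem_pspan (hC : IsConnectedDecomposition α C) (hγ : γ ∈ C) (hδ : δ ∈ C)
    {w : X} (hwγ : w ∈ pspan γ) (hwδ : w ∈ pspan δ) : γ = δ := by
  by_contra hne
  exact (hC.2.1 γ hγ δ hδ hne).subset ⟨hwγ, hwδ⟩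

lemma apply_eq_some_of_mem_pspan (hC : IsConnectedDecomposition α C) (hδ : δ ∈ C)
    {w w' : X} (hw : w ∈ pspan δ) (h : α w = some w') : δ w = some w' := by
  obtain ⟨γ, hγ, hγw⟩ := (hC.2.2 w w').mp h
  rwa [← hC.eq_of_mem_pspan hγ hδ (Or.inl (by simp [pdom, hγw])) hw]

lemma pit_apply_eq_some_of_mem_pspan (hC : IsConnectedDecomposition α C) (hδ : δ ∈ C)
    {w z : X} (hw : w ∈ pspan δ) {m : ℕ} (h : pit α m w = some z) : pit δ m w = some z := by
  induction m generalizing z with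
  | zero => exact h
  | succ m ih =>
    obtain ⟨w', hw', hw'z⟩ := Option.bind_eq_some_iff.mp h
    rw [pit_succ_apply, ih hw', Option.bind_some]
    exact hC.apply_eq_some_of_mem_pspan hδ (mem_pspan_of_pit_apply_eq_some (ih hw') hw) hw'z

lemma eq_of_joinable (hC : IsConnectedDecomposition α C) (hγ : γ ∈ C) (hδ : δ ∈ C)
    {u x : X} (hu : u ∈ pspan γ) (hx : x ∈ pspan δ) (h : Joinable α u x) : γ = δ := by
  obtain ⟨k, m, z, hk, hm⟩ := h
  exact hC.eq_of_mem_pspan hγ hδ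
    (mem_pspan_of_pit_apply_eq_some (hC.pit_apply_eq_some_of_mem_pspan hγ hu hk) hu)
    (mem_pspan_of_pit_apply_eq_some (hC.pit_apply_eq_some_of_mem_pspan hδ hx hm) hx)

lemma eq_component (hC : IsConnectedDecomposition α C) (hδ : δ ∈ C) {x : X}
    (hx : x ∈ pdom δ) : δ = component α x := by
  obtain ⟨⟨-, hconn⟩, hle⟩ := hC.1 δ hδ
  funext u
  by_cases hux : Joinable α u x
  · rw [component_apply_of_joinable hux]
    refine Option.ext fun v => ⟨hle u v, fun h => ?_⟩
    obtain ⟨γ, hγ, hγu⟩ := (hC.2.2 u v).mp h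
    rwa [← hC.eq_of_joinable hγ hδ (Or.inl (by simp [pdom, hγu])) (Or.inl hx) hux]
  · rw [component_apply_of_not_joinable hux]
    by_contra hu
    exact hux (Joinable.mono hle (hconn u (Or.inl hu) x (Or.inl hx)))

lemma eq_components (hC : IsConnectedDecomposition α C) : C = components α := by
  ext γ
  constructor
  · intro hγ
    obtain ⟨x, hx⟩ := (hC.1 γ hγ).1.exists_mem_pdom
    obtain ⟨y, hy⟩ := Option.ne_none_iff_exists'.mp hx
    exact ⟨x, by simp [pdom, (hC.1 γ hγ).2 x y hy], (hC.eq_component hγ hx).symm⟩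
  · rintro ⟨x, hx, rfl⟩
    obtain ⟨y, hy⟩ := Option.ne_none_iff_exists'.mp hx
    obtain ⟨δ, hδ, hδx⟩ := (hC.2.2 x y).mp hy
    rwa [← hC.eq_component hδ (by simp [pdom, hδx])]

end IsConnectedDecomposition

theorem exists_unique_connected_components_general (α : PT X) :
    ∃! C : Set (PT X),
      (∀ γ ∈ C, Connected γ ∧ ∀ x y, γ x = some y → α x = some y) ∧
      (∀ γ ∈ C, ∀ δ ∈ C, γ ≠ δ → pspan γ ∩ pspan δ = ∅) ∧
      (∀ x y, α x = some y ↔ ∃ γ ∈ C, γ x = some y) :=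
  ⟨components α, isConnectedDecomposition_components α,
    fun _ hC => IsConnectedDecomposition.eq_components hC⟩

/-- Proposition 4.5. Every nonzero `α ∈ P(X)` is, in a unique way,
the join of a set of pairwise completely disjoint connected partial transformations
contained in `α`. -/
theorem exists_unique_connected_components (α : PT X) (hα : α ≠ pzero) :
    ∃! C : Set (PT X),
      (∀ γ ∈ C, Connected γ ∧ ∀ x y, γ x = some y → α x = some y) ∧
      (∀ γ ∈ C, ∀ δ ∈ C, γ ≠ δ → pspan γ ∩ pspan δ = ∅) ∧
      (∀ x y, α x = some y ↔ ∃ γ ∈ C, γ x = some y) :=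
  exists_unique_connected_components_general α

end ConjPaper
end

section
/- Let γ, δ ∈ P(X) be connected of type cho with roots x_0 and y_0, respectively. Then Γ(γ) is rp-homomorphic to Γ(δ) if and only if ρ_γ(x_0) ≤ ρ_δ(y_0). -/
namespace ConjPaper

open Classical

variable {X : Type*}

/-- `γ` has a cycle (of some length `k ≥ 1`). -/
def HasCycleAny (γ : PT X) : Prop := ∃ k, 1 ≤ k ∧ ∃ x, pit γ k x = some x

/-- A right ray in `γ`: pairwise distinct `x₀, x₁, x₂, …` with `xₙγ = xₙ₊₁`. -/
def IsRightRay (γ : PT X) (f : ℕ → X) : Prop :=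
  Function.Injective f ∧ ∀ n, γ (f n) = some (f (n + 1))

/-- A maximal right ray: a right ray with `x₀ ∉ im(γ)`. -/
def IsMaxRightRay (γ : PT X) (f : ℕ → X) : Prop :=
  IsRightRay γ f ∧ f 0 ∉ pim γ

/-- A double ray in `γ`: pairwise distinct `(xᵢ)_{i ∈ ℤ}` with `xᵢγ = xᵢ₊₁`. -/
def IsDoubleRay (γ : PT X) (f : ℤ → X) : Prop :=
  Function.Injective f ∧ ∀ i, γ (f i) = some (f (i + 1))

/-- A left ray in `γ`: pairwise distinct `…, x₂, x₁, x₀` with `xₙ₊₁γ = xₙ`. -/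
def IsLeftRay (γ : PT X) (f : ℕ → X) : Prop :=
  Function.Injective f ∧ ∀ n, γ (f (n + 1)) = some (f n)

/-- A chain of length `k ≥ 1` in `γ`: distinct `x₀ → x₁ → ⋯ → x_k`. -/
def IsChain' (γ : PT X) (k : ℕ) (f : ℕ → X) : Prop :=
  1 ≤ k ∧ (∀ i ≤ k, ∀ j ≤ k, f i = f j → i = j) ∧ ∀ i < k, γ (f i) = some (f (i + 1))

/-- A maximal chain: a chain with `x₀ ∉ im(γ)` and `x_k ∉ dom(γ)`. -/
def IsMaxChain' (γ : PT X) (k : ℕ) (f : ℕ → X) : Prop :=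
  IsChain' γ k f ∧ f 0 ∉ pim γ ∧ γ (f k) = none

/-- `γ` is of type cho ("chains only"): connected, contains a maximal chain, but has
no cycles and no rays of any kind. -/
def IsCho (γ : PT X) : Prop :=
  Connected γ ∧ (∃ k f, IsMaxChain' γ k f) ∧ ¬HasCycleAny γ ∧
    (∀ f, ¬IsRightRay γ f) ∧ (∀ f, ¬IsDoubleRay γ f) ∧ (∀ f, ¬IsLeftRay γ f)

/-- `γ` is of type rro ("right rays only"): connected, contains a maximal right ray,
but has no cycles, no double rays, no left rays, and no maximal chains. -/
def IsRro (γ : PT X) : Prop :=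
  Connected γ ∧ (∃ f, IsMaxRightRay γ f) ∧ ¬HasCycleAny γ ∧
    (∀ f, ¬IsDoubleRay γ f) ∧ (∀ f, ¬IsLeftRay γ f) ∧ (∀ k f, ¬IsMaxChain' γ k f)

/-- The ordinal rank `ρ_γ(x)` of `x` with respect to the relation
`R_γ = {(y, x) : yγ = x}` (which is well founded in all cases of interest;
for definiteness the value is `0` if `R_γ` is not well founded). -/
noncomputable def prank (γ : PT X) (x : X) : Ordinal :=
  if h : WellFounded (fun y z : X => γ y = some z) then (h.apply x).rank else 0

/-- `⟨bₙ⟩` dominates `⟨aₙ⟩`: there is `k ≥ 0` with `aₙ ≤ b_{k+n}` for all `n`. -/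
def Dominates (b a : ℕ → Ordinal) : Prop := ∃ k, ∀ n, a n ≤ b (k + n)

/-! ### Auxiliary lemmas -/

lemma pit_succ (γ : PT X) (n : ℕ) (x : X) : pit γ (n + 1) x = (pit γ n x).bind γ := rfl

lemma pit_head (γ : PT X) (n : ℕ) (x : X) : pit γ (n + 1) x = (γ x).bind (pit γ n) := by
  induction n with
  | zero => cases h : γ x <;> simp [pit, pcomp, pid, h]
  | succ n ih =>
    rw [pit_succ, ih]
    cases h : γ x <;> simp [pit_succ]

/-- In a connected `γ` with terminal vertex `x0` in its span, every terminal vertex of the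
span equals `x0`. -/
lemma terminal_unique {γ : PT X} (hc : Connected γ) {x0 : X} (hx0 : x0 ∈ pspan γ)
    (hx0t : γ x0 = none) {x : X} (hx : x ∈ pspan γ) (hxt : γ x = none) : x = x0 := by
  obtain ⟨k, m, z, hk, hm⟩ := hc.2 x hx x0 hx0
  have hm0 : z = x0 := by
    cases m with
    | zero => simpa [pit, pid] using hm.symm
    | succ m => rw [pit_head, hx0t] at hm; simp at hm
  subst hm0
  cases k with
  | zero => simpa [pit, pid] using hk
  | succ k => rw [pit_head, hxt] at hk; simp at hk

lemma exists_descending_of_not_wf {α : Type*} {r : α → α → Prop} (h : ¬ WellFounded r) :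
    ∃ f : ℕ → α, ∀ n, r (f (n + 1)) (f n) := by
  have h1 : ∃ a, ¬ Acc r a := by
    by_contra hc
    push_neg at hc
    exact h ⟨fun a => hc a⟩
  have h2 : ∀ a, ¬ Acc r a → ∃ b, r b a ∧ ¬ Acc r b := by
    intro a ha
    by_contra hc
    push_neg at hc
    exact ha (Acc.intro a fun b hb => hc b hb)
  let g : {a // ¬ Acc r a} → {a // ¬ Acc r a} :=
    fun a => ⟨(h2 a.1 a.2).choose, (h2 a.1 a.2).choose_spec.2⟩
  refine ⟨fun n => (g^[n] ⟨h1.choose, h1.choose_spec⟩).1, fun n => ?_⟩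
  show r (g^[n + 1] ⟨h1.choose, h1.choose_spec⟩).1 (g^[n] ⟨h1.choose, h1.choose_spec⟩).1
  rw [Function.iterate_succ_apply']
  exact (h2 _ (g^[n] ⟨h1.choose, h1.choose_spec⟩).2).choose_spec.1

lemma chain_fwd {γ : PT X} {f : ℕ → X} (hf : ∀ n, γ (f n) = some (f (n + 1))) :
    ∀ m n, pit γ m (f n) = some (f (n + m)) := by
  intro m
  induction m with
  | zero => intro n; rfl
  | succ m ih =>
    intro n
    rw [pit_succ, ih n]
    show γ (f (n + m)) = some (f (n + (m + 1)))
    rw [hf (n + m), Nat.add_assoc]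

lemma chain_back {γ : PT X} {f : ℕ → X} (hf : ∀ n, γ (f (n + 1)) = some (f n)) :
    ∀ m n, pit γ m (f (n + m)) = some (f n) := by
  intro m
  induction m with
  | zero => intro n; rfl
  | succ m ih =>
    intro n
    have : n + (m + 1) = (n + 1) + m := by omega
    rw [this, pit_succ, ih (n + 1)]
    exact hf n

lemma no_cycle_seq {γ : PT X} (hγ : IsCho γ) {x : X} {i j : ℕ} (hij : i < j)
    (hp : pit γ (j - i) x = some x) : False :=
  hγ.2.2.1 ⟨j - i, by omega, x, hp⟩

lemma wf_back {γ : PT X} (hγ : IsCho γ) : WellFounded (fun y z : X => γ y = some z) := by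
  by_contra h
  obtain ⟨f, hf⟩ := exists_descending_of_not_wf h
  by_cases hinj : Function.Injective f
  · exact hγ.2.2.2.2.2 f ⟨hinj, hf⟩
  · simp only [Function.Injective, not_forall] at hinj
    obtain ⟨i, j, hfij, hne⟩ := hinj
    rcases lt_or_gt_of_ne hne with h' | h'
    · have := chain_back hf (j - i) i
      rw [Nat.add_sub_cancel' h'.le, ← hfij] at this
      exact no_cycle_seq hγ h' this
    · have := chain_back hf (i - j) j
      rw [Nat.add_sub_cancel' h'.le, hfij] at this
      exact no_cycle_seq hγ h' this

lemma wf_fwd {γ : PT X} (hγ : IsCho γ) : WellFounded (fun a b : X => γ b = some a) := by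
  by_contra h
  obtain ⟨f, hf⟩ := exists_descending_of_not_wf h
  by_cases hinj : Function.Injective f
  · exact hγ.2.2.2.1 f ⟨hinj, hf⟩
  · simp only [Function.Injective, not_forall] at hinj
    obtain ⟨i, j, hfij, hne⟩ := hinj
    rcases lt_or_gt_of_ne hne with h' | h'
    · have := chain_fwd hf (j - i) i
      rw [Nat.add_sub_cancel' h'.le, ← hfij] at this
      exact no_cycle_seq hγ h' this
    · have := chain_fwd hf (i - j) j
      rw [Nat.add_sub_cancel' h'.le, hfij] at this
      exact no_cycle_seq hγ h' this

lemma prank_eq {γ : PT X} (wf : WellFounded (fun y z : X => γ y = some z)) (x : X) :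
    prank γ x = (wf.apply x).rank := by
  rw [prank, dif_pos wf]

lemma prank_lt {γ : PT X} (wf : WellFounded (fun y z : X => γ y = some z)) {c x : X}
    (h : γ c = some x) : prank γ c < prank γ x := by
  rw [prank_eq wf, prank_eq wf]
  exact Acc.rank_lt_of_rel (wf.apply x) h

lemma prank_le_of_children {γ : PT X} (wf : WellFounded (fun y z : X => γ y = some z))
    {x : X} {o : Ordinal} (h : ∀ c, γ c = some x → prank γ c < o) : prank γ x ≤ o := by
  rw [prank_eq wf, Acc.rank_eq]
  refine Ordinal.iSup_le fun b => ?_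
  rw [Order.succ_le_iff]
  have := h b.1 b.2
  rwa [prank_eq wf] at this

lemma exists_child_prank_ge {δ : PT X} (wf : WellFounded (fun y z : X => δ y = some z))
    {q : X} {o : Ordinal} (h : o < prank δ q) : ∃ c, δ c = some q ∧ o ≤ prank δ c := by
  rw [prank_eq wf, Acc.rank_eq, Ordinal.lt_iSup_iff] at h
  obtain ⟨⟨c, hc⟩, h⟩ := h
  refine ⟨c, hc, ?_⟩
  rw [prank_eq wf]
  exact Order.lt_succ_iff.mp h

/-- Choice of a child of `q` in `Γ(δ)` of rank at least `o`, if one exists. -/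
noncomputable def chooseChild (δ : PT X) (q : X) (o : Ordinal) : Option X :=
  if h : ∃ c, δ c = some q ∧ o ≤ prank δ c then some h.choose else none

/-- The rp-homomorphism constructed by recursion along `γ` from the root. -/
noncomputable def phiF (γ δ : PT X) (x0 y0 : X)
    (wf : WellFounded (fun a b : X => γ b = some a)) : X → Option X :=
  wf.fix (fun x rec =>
    if x = x0 then some y0
    else
      match h : γ x with
      | none => none
      | some p => (rec p h).bind fun q => chooseChild δ q (prank γ x))

lemma phiF_root (γ δ : PT X) (x0 y0 : X)
    (wf : WellFounded (fun a b : X => γ b = some a)) :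
    phiF γ δ x0 y0 wf x0 = some y0 := by
  rw [phiF, WellFounded.fix_eq, if_pos rfl]

lemma phiF_none (γ δ : PT X) (x0 y0 : X)
    (wf : WellFounded (fun a b : X => γ b = some a)) {x : X} (hx : x ≠ x0)
    (hγx : γ x = none) : phiF γ δ x0 y0 wf x = none := by
  rw [phiF, WellFounded.fix_eq, if_neg hx]
  split <;> simp_all

lemma phiF_some (γ δ : PT X) (x0 y0 : X)
    (wf : WellFounded (fun a b : X => γ b = some a)) {x p : X} (hx : x ≠ x0)
    (hp : γ x = some p) :
    phiF γ δ x0 y0 wf x =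
      (phiF γ δ x0 y0 wf p).bind fun q => chooseChild δ q (prank γ x) := by
  conv_lhs => rw [phiF, WellFounded.fix_eq]
  rw [if_neg hx]
  split
  · simp_all
  · rename_i p' hp'
    rw [hp] at hp'
    cases hp'
    rfl

lemma phiF_spec {γ δ : PT X} (hγ : IsCho γ)
    (wfγ : WellFounded (fun y z : X => γ y = some z))
    (wfδ : WellFounded (fun y z : X => δ y = some z))
    (wf : WellFounded (fun a b : X => γ b = some a))
    {x0 y0 : X} (hx0 : x0 ∈ pspan γ) (hx0t : γ x0 = none)
    (h0 : prank γ x0 ≤ prank δ y0) :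
    ∀ x, x ∈ pspan γ →
      ∃ y', phiF γ δ x0 y0 wf x = some y' ∧ prank γ x ≤ prank δ y' ∧
        ∀ p q, γ x = some p → phiF γ δ x0 y0 wf p = some q → δ y' = some q := by
  intro x
  induction x using WellFounded.induction wf with
  | _ x IH =>
  intro hx
  by_cases hxx0 : x = x0
  · subst hxx0
    refine ⟨y0, phiF_root γ δ x y0 wf, h0, fun p q hp _ => ?_⟩
    rw [hx0t] at hp; cases hp
  · have hdom : γ x ≠ none := fun hn => hxx0 (terminal_unique hγ.1 hx0 hx0t hx hn)
    obtain ⟨p, hp⟩ := Option.ne_none_iff_exists'.mp hdom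
    have hpspan : p ∈ pspan γ := Or.inr ⟨x, hp⟩
    obtain ⟨q, hq, hrank, -⟩ := IH p hp hpspan
    have hlt : prank γ x < prank δ q := lt_of_lt_of_le (prank_lt wfγ hp) hrank
    have hex : ∃ c, δ c = some q ∧ prank γ x ≤ prank δ c := exists_child_prank_ge wfδ hlt
    refine ⟨hex.choose, ?_, hex.choose_spec.2, ?_⟩
    · rw [phiF_some γ δ x0 y0 wf hxx0 hp, hq]
      simp [chooseChild, dif_pos hex]
    · intro p' q' hp' hq'
      rw [hp] at hp'; cases hp'
      rw [hq] at hq'; cases hq'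
      exact hex.choose_spec.1

lemma rp_rank_le {γ δ φ : PT X}
    (wfγ : WellFounded (fun y z : X => γ y = some z))
    (wfδ : WellFounded (fun y z : X => δ y = some z))
    (hφ : IsRpHom γ δ φ) :
    ∀ x y', φ x = some y' → prank γ x ≤ prank δ y' := by
  intro x
  induction x using WellFounded.induction wfγ with
  | _ x IH =>
  intro y' hy'
  refine prank_le_of_children wfγ fun c hc => ?_
  obtain ⟨c', x'', hφc, hφx, harc⟩ := hφ.1 c x hc
  rw [hy'] at hφx; cases hφx
  exact lt_of_le_of_lt (IH c hc c' hφc) (prank_lt wfδ harc)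

/-- Proposition 4.26. Let `γ, δ ∈ P(X)` be connected of type cho with
roots `x₀` and `y₀` respectively. Then `Γ(γ)` is rp-homomorphic to `Γ(δ)` iff
`ρ_γ(x₀) ≤ ρ_δ(y₀)`. -/
theorem cho_rpHomomorphic_iff_rank_le (γ δ : PT X) (hγ : IsCho γ) (hδ : IsCho δ)
    (x0 y0 : X) (hx0 : x0 ∈ pspan γ) (hx0t : γ x0 = none)
    (hy0 : y0 ∈ pspan δ) (hy0t : δ y0 = none) :
    (∃ φ : PT X, IsRpHom γ δ φ) ↔ prank γ x0 ≤ prank δ y0 := by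
  have wfγ := wf_back hγ
  have wfδ := wf_back hδ
  have wff := wf_fwd hγ
  constructor
  · rintro ⟨φ, hφ⟩
    obtain ⟨k, f, ⟨⟨hk1, hinj, harc⟩, hfim, hfkt⟩⟩ := hγ.2.1
    obtain ⟨k, rfl⟩ := Nat.exists_eq_add_of_le' hk1
    have harck : γ (f k) = some (f (k + 1)) := harc k (Nat.lt_succ_self k)
    have hfk_span : f (k + 1) ∈ pspan γ := Or.inr ⟨f k, harck⟩
    have hfk_eq : f (k + 1) = x0 := terminal_unique hγ.1 hx0 hx0t hfk_span hfkt
    obtain ⟨a, b, hφa, hφb, hab⟩ := hφ.1 (f k) (f (k + 1)) harck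
    rw [hfk_eq] at hφb
    have hb_span : b ∈ pspan δ := Or.inr ⟨a, hab⟩
    have hb_t : δ b = none := hφ.2 x0 b hx0t hφb
    have hb_eq : b = y0 := terminal_unique hδ.1 hy0 hy0t hb_span hb_t
    rw [hb_eq] at hφb
    exact rp_rank_le wfγ wfδ hφ x0 y0 hφb
  · intro h0
    refine ⟨phiF γ δ x0 y0 wff, ?_, ?_⟩
    · intro x y hxy
      have hxs : x ∈ pspan γ := Or.inl (by simp [pdom, hxy])
      have hys : y ∈ pspan γ := Or.inr ⟨x, hxy⟩
      obtain ⟨x', hx', -, hfun⟩ := phiF_spec hγ wfγ wfδ wff hx0 hx0t h0 x hxs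
      obtain ⟨y', hy', -, -⟩ := phiF_spec hγ wfγ wfδ wff hx0 hx0t h0 y hys
      exact ⟨x', y', hx', hy', hfun y y' hxy hy'⟩
    · intro x x' hxn hφx
      by_cases hxx0 : x = x0
      · subst hxx0
        rw [phiF_root] at hφx
        cases hφx
        exact hy0t
      · rw [phiF_none γ δ x0 y0 wff hxx0 hxn] at hφx
        cases hφx

end ConjPaper
end

section
/- Let γ, δ ∈ P(X) be of type rro, let η be a maximal right ray in γ and ξ a maximal right ray in δ such that ⟨ξ^δ_n⟩ dominates ⟨η^γ_n⟩. Then for every maximal right ray η₁ in γ and every maximal right ray ξ₁ in δ, the sequence ⟨(ξ₁)^δ_n⟩ dominates the sequence ⟨(η₁)^γ_n⟩. -/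
namespace ConjPaper

open Classical

variable {X : Type*}

lemma Dominates.trans {a b c : ℕ → Ordinal} (hcb : Dominates c b) (hba : Dominates b a) :
    Dominates c a := by
  obtain ⟨k, hk⟩ := hcb
  obtain ⟨l, hl⟩ := hba
  exact ⟨k + l, fun n => (hl n).trans (by simpa [Nat.add_assoc] using hk (l + n))⟩

lemma dominates_of_shift_eq {a b : ℕ → Ordinal} (ha : Monotone a) {k m : ℕ}
    (h : ∀ n, a (k + n) = b (m + n)) : Dominates b a :=
  ⟨m, fun n => (ha (Nat.le_add_left n k)).trans (h n).le⟩

section Rays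

variable {γ : PT X} {f g : ℕ → X}

lemma pit_apply_of_step (hf : ∀ n, γ (f n) = some (f (n + 1))) (n m : ℕ) :
    pit γ n (f m) = some (f (m + n)) := by
  induction n with
  | zero => rfl
  | succ n ih =>
    show (pit γ n (f m)).bind γ = _
    rw [ih, Option.bind_some, hf, Nat.add_assoc]

/-- In a connected `γ` any two forward paths meet, and since `γ` is a function they agree
from the meeting point on. -/
lemma Connected.exists_shift_eq (hγ : Connected γ) (hf : ∀ n, γ (f n) = some (f (n + 1)))
    (hg : ∀ n, γ (g n) = some (g (n + 1))) : ∃ k m, ∀ n, f (k + n) = g (m + n) := by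
  have hf₀ : f 0 ∈ pspan γ := Or.inl (by simp [pdom, hf 0])
  have hg₀ : g 0 ∈ pspan γ := Or.inl (by simp [pdom, hg 0])
  obtain ⟨k, m, z, hk, hm⟩ := hγ.2 (f 0) hf₀ (g 0) hg₀
  rw [pit_apply_of_step hf, Nat.zero_add] at hk
  rw [pit_apply_of_step hg, Nat.zero_add] at hm
  refine ⟨k, m, fun n => ?_⟩
  induction n with
  | zero => exact Option.some.inj (hk.trans hm.symm)
  | succ n ih =>
    have hstep := hf (k + n)
    rw [ih, hg (m + n)] at hstep
    exact (Option.some.inj hstep).symm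

lemma prank_le_of_apply_eq_some {x y : X} (h : γ x = some y) :
    prank γ x ≤ prank γ y := by
  by_cases hw : WellFounded (fun y z : X => γ y = some z)
  · simp only [prank, dif_pos hw]
    exact (Acc.rank_lt_of_rel (hw.apply y) h).le
  · simp [prank, dif_neg hw]

lemma monotone_prank_of_step (hf : ∀ n, γ (f n) = some (f (n + 1))) :
    Monotone fun n => prank γ (f n) :=
  monotone_nat_of_le_succ fun n => prank_le_of_apply_eq_some (hf n)

/-- Two rays of a connected `γ` share a tail, and ranks increase along a ray. -/
lemma Connected.dominates_prank (hγ : Connected γ)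
    (hf : IsRightRay γ f) (hg : IsRightRay γ g) :
    Dominates (fun n => prank γ (g n)) (fun n => prank γ (f n)) := by
  obtain ⟨k, m, h⟩ := hγ.exists_shift_eq hf.2 hg.2
  exact dominates_of_shift_eq (monotone_prank_of_step hf.2) fun n => congrArg (prank γ) (h n)

end Rays

/-- Lemma 4.30. Let `γ, δ ∈ P(X)` be of type rro, `η` a maximal right
ray in `γ` and `ξ` a maximal right ray in `δ` with `⟨ξ_n^δ⟩` dominating `⟨η_n^γ⟩`. Then
for every maximal right ray `η₁` in `γ` and every maximal right ray `ξ₁` in `δ`,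
`⟨(ξ₁)_n^δ⟩` dominates `⟨(η₁)_n^γ⟩`. -/
theorem rro_dominates_all (γ δ : PT X) (hγ : IsRro γ) (hδ : IsRro δ)
    (η ξ : ℕ → X) (hη : IsMaxRightRay γ η) (hξ : IsMaxRightRay δ ξ)
    (hdom : Dominates (fun n => prank δ (ξ n)) (fun n => prank γ (η n)))
    (η₁ ξ₁ : ℕ → X) (hη₁ : IsMaxRightRay γ η₁) (hξ₁ : IsMaxRightRay δ ξ₁) :
    Dominates (fun n => prank δ (ξ₁ n)) (fun n => prank γ (η₁ n)) :=
  (hδ.1.dominates_prank hξ.1 hξ₁.1).trans (hdom.trans (hγ.1.dominates_prank hη₁.1 hη.1))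

end ConjPaper
end

section
/- Let X be a nonempty set and let α, β : X → X be full transformations. Then α ~c β in T(X) if and only if one of the following holds: (1) both α and β have a periodic point and cs(α) = cs(β); (2) both α and β have a double ray but no periodic point; (3) neither α nor β has a periodic point or a double ray, and (a) for every connected component γ of α there exist a connected component δ of β, a maximal right ray (x_n) in γ, and a maximal right ray (y_n) in δ such that the sequence ⟨ρ_δ(y_n)⟩ dominates ⟨ρ_γ(x_n)⟩, and (b) for every connected component δ of β there exist a connected component γ of α, a maximal right ray (y_n) in δ, and a maximal right ray (x_n) in γ such that ⟨ρ_γ(x_n)⟩ dominates ⟨ρ_δ(y_n)⟩. -/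
namespace ConjPaper

open Classical

variable {X : Type*}

/-- Conjugacy `α ~c β` in the full transformation monoid `T(X)`:
there are full transformations `φ, ψ` with `φ ∘ α = β ∘ φ` and `ψ ∘ β = α ∘ ψ`
(the paper's `αφ = φβ` and `βψ = ψα` in left-to-right notation). -/
def ConjT (α β : X → X) : Prop :=
  ∃ φ ψ : X → X, φ ∘ α = β ∘ φ ∧ ψ ∘ β = α ∘ ψ

/-- The component equivalence: `x ≈_α y` iff `α^k(x) = α^m(y)` for some `k, m ≥ 0`. -/
def relT (α : X → X) (x y : X) : Prop := ∃ k m : ℕ, α^[k] x = α^[m] y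

/-- `Y` is an `≈_α`-class (equivalently, the underlying set of a connected
component of `α`). -/
def IsClass (α : X → X) (Y : Set X) : Prop := ∃ x0, Y = {y | relT α y x0}

/-- `α` has a periodic point. -/
def HasPer (α : X → X) : Prop := ∃ x, ∃ n, 1 ≤ n ∧ α^[n] x = x

/-- `α` has a double ray: an injective family `(xᵢ)_{i ∈ ℤ}` with `α(xᵢ) = xᵢ₊₁`. -/
def HasDR (α : X → X) : Prop :=
  ∃ f : ℤ → X, Function.Injective f ∧ ∀ i, α (f i) = f (i + 1)

/-- The set `M(α)` of cycle lengths of `α`. -/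
def MT (α : X → X) : Set ℕ :=
  {n | 1 ≤ n ∧ ∃ x, α^[n] x = x ∧ ∀ i, 1 ≤ i → i < n → α^[i] x ≠ x}

/-- The cycle set `cs(α)`: the divisibility-minimal elements of `M(α)`. -/
def csT (α : X → X) : Set ℕ := {n ∈ MT α | ∀ m ∈ MT α, m ∣ n → m = n}

/-- The ordinal rank `ρ(x)` with respect to the relation `{(y, x) : α(y) = x}`
(value `0` if that relation is not well founded, which does not occur in the
intended uses). -/
noncomputable def frank (α : X → X) (x : X) : Ordinal :=
  if h : WellFounded (fun y z : X => α y = z) then (h.apply x).rank else 0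

/-- A maximal right ray of the connected component of `α` on the class `Y`:
pairwise distinct `(xₙ)` in `Y` with `α(xₙ) = xₙ₊₁` and `x₀ ∉ im(α)`. -/
def IsMRR (α : X → X) (Y : Set X) (f : ℕ → X) : Prop :=
  Function.Injective f ∧ (∀ n, f n ∈ Y) ∧ (∀ n, α (f n) = f (n + 1)) ∧
    f 0 ∉ Set.range α

section Lemmas

variable {X : Type*}

/-! ### Basic lemmas about `relT` -/

lemma relT_refl (α : X → X) (x : X) : relT α x x := ⟨0, 0, rfl⟩

lemma relT_symm {α : X → X} {x y : X} (h : relT α x y) : relT α y x := by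
  obtain ⟨k, m, h⟩ := h; exact ⟨m, k, h.symm⟩

lemma relT_trans {α : X → X} {x y z : X} (h1 : relT α x y) (h2 : relT α y z) :
    relT α x z := by
  obtain ⟨k, m, h1⟩ := h1
  obtain ⟨k', m', h2⟩ := h2
  refine ⟨k' + k, m + m', ?_⟩
  rw [Function.iterate_add_apply, h1, ← Function.iterate_add_apply, add_comm k' m,
    Function.iterate_add_apply, h2, ← Function.iterate_add_apply]

lemma relT_step (α : X → X) (x : X) : relT α (α x) x := ⟨0, 1, by simp⟩

/-- The `≈_α`-class of `x`. -/
def Cset (α : X → X) (x : X) : Set X := {y | relT α y x}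

lemma isClass_Cset (α : X → X) (x : X) : IsClass α (Cset α x) := ⟨x, rfl⟩

lemma mem_Cset_self (α : X → X) (x : X) : x ∈ Cset α x := relT_refl α x

lemma Cset_eq_of_rel {α : X → X} {x y : X} (h : relT α x y) : Cset α x = Cset α y := by
  ext w
  exact ⟨fun hw => relT_trans hw h, fun hw => relT_trans hw (relT_symm h)⟩

lemma Cset_step (α : X → X) (x : X) : Cset α (α x) = Cset α x :=
  Cset_eq_of_rel (relT_step α x)

/-! ### Periodic points -/

lemma per_of_iter {α : X → X} {x : X} {a c : ℕ} (h : α^[a] x = α^[c] x) (hlt : a < c) :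
    HasPer α := by
  refine ⟨α^[a] x, c - a, by omega, ?_⟩
  rw [← Function.iterate_add_apply]
  have hca : c - a + a = c := by omega
  rw [hca, ← h]

lemma orbit_inj {α : X → X} (hp : ¬HasPer α) {x : X} {a b : ℕ}
    (h : α^[a] x = α^[b] x) : a = b := by
  rcases lt_trichotomy a b with hab | hab | hab
  · exact absurd (per_of_iter h hab) hp
  · exact hab
  · exact absurd (per_of_iter h.symm hab) hp

lemma semiconj_iterate {α β φ : X → X} (hs : ∀ x, φ (α x) = β (φ x)) (n : ℕ) (x : X) :
    φ (α^[n] x) = β^[n] (φ x) :=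
  Function.Semiconj.iterate_right hs n x

lemma hasPer_map {α β φ : X → X} (hs : ∀ x, φ (α x) = β (φ x)) (h : HasPer α) :
    HasPer β := by
  obtain ⟨x, n, hn, hx⟩ := h
  exact ⟨φ x, n, hn, by rw [← semiconj_iterate hs, hx]⟩

lemma relT_map {α β φ : X → X} (hs : ∀ x, φ (α x) = β (φ x)) {x y : X}
    (h : relT α x y) : relT β (φ x) (φ y) := by
  obtain ⟨k, m, h⟩ := h
  exact ⟨k, m, by rw [← semiconj_iterate hs, ← semiconj_iterate hs, h]⟩

/-! ### `MT` and `csT` -/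

lemma MT_transfer {α β φ : X → X} (hs : ∀ x, φ (α x) = β (φ x)) :
    ∀ n ∈ MT α, ∃ m ∈ MT β, m ∣ n := by
  rintro n ⟨hn1, x, hx, -⟩
  have hper : Function.IsPeriodicPt β n (φ x) := by
    show β^[n] (φ x) = φ x
    rw [← semiconj_iterate hs, hx]
  have hm1 : 0 < Function.minimalPeriod β (φ x) :=
    Function.IsPeriodicPt.minimalPeriod_pos (by omega) hper
  refine ⟨Function.minimalPeriod β (φ x),
    ⟨hm1, φ x, Function.isPeriodicPt_minimalPeriod β (φ x), ?_⟩,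
    hper.minimalPeriod_dvd⟩
  intro i hi1 him hcontra
  have : Function.minimalPeriod β (φ x) ≤ i :=
    Function.IsPeriodicPt.minimalPeriod_le (by omega) hcontra
  omega

lemma cs_div {α : X → X} {n : ℕ} (hn : n ∈ MT α) : ∃ d ∈ csT α, d ∣ n := by
  have hne : {d | d ∈ MT α ∧ d ∣ n}.Nonempty := ⟨n, hn, dvd_rfl⟩
  have hd := Nat.sInf_mem hne
  refine ⟨sInf {d | d ∈ MT α ∧ d ∣ n}, ⟨hd.1, ?_⟩, hd.2⟩
  intro m hm hmd
  have h1 : sInf {d | d ∈ MT α ∧ d ∣ n} ≤ m := Nat.sInf_le ⟨hm, hmd.trans hd.2⟩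
  have h2 : m ≤ sInf {d | d ∈ MT α ∧ d ∣ n} := Nat.le_of_dvd (by have := hd.1.1; omega) hmd
  omega

lemma csT_subset {α β : X → X} (h1 : ∀ n ∈ MT α, ∃ m ∈ MT β, m ∣ n)
    (h2 : ∀ n ∈ MT β, ∃ m ∈ MT α, m ∣ n) : csT α ⊆ csT β := by
  rintro n ⟨hnM, hmin⟩
  obtain ⟨m, hm, hmn⟩ := h1 n hnM
  obtain ⟨m', hm', hm'm⟩ := h2 m hm
  have he : m' = n := hmin m' hm' (hm'm.trans hmn)
  have hmn' : m = n := Nat.dvd_antisymm hmn (he ▸ hm'm)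
  subst hmn'
  refine ⟨hm, ?_⟩
  intro d hd hdn
  obtain ⟨d', hd', hd'd⟩ := h2 d hd
  have : d' = m := hmin d' hd' (hd'd.trans hdn)
  exact Nat.dvd_antisymm hdn (this ▸ hd'd)

lemma csT_eq {α β : X → X} (h1 : ∀ n ∈ MT α, ∃ m ∈ MT β, m ∣ n)
    (h2 : ∀ n ∈ MT β, ∃ m ∈ MT α, m ∣ n) : csT α = csT β :=
  Set.Subset.antisymm (csT_subset h1 h2) (csT_subset h2 h1)

lemma MT_div_of_cs {α β : X → X} (hcs : csT α = csT β) :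
    ∀ n ∈ MT α, ∃ d ∈ MT β, d ∣ n := by
  intro n hn
  obtain ⟨d, hd, hdvd⟩ := cs_div hn
  rw [hcs] at hd
  exact ⟨d, hd.1, hdvd⟩

/-! ### Double rays -/

lemma inj_of_step {α : X → X} (hp : ¬HasPer α) {f : ℤ → X}
    (hstep : ∀ i, α (f i) = f (i + 1)) : Function.Injective f := by
  have hiter : ∀ (n : ℕ) (i : ℤ), α^[n] (f i) = f (i + n) := by
    intro n
    induction n with
    | zero => intro i; simp
    | succ n ih =>
      intro i
      rw [Function.iterate_succ_apply', ih, hstep]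
      congr 1
      push_cast
      ring
  intro i j hij
  by_contra hne
  rcases lt_trichotomy i j with h | h | h
  · refine hp ⟨f i, (j - i).toNat, by omega, ?_⟩
    rw [hiter]
    have he : i + ((j - i).toNat : ℤ) = j := by omega
    rw [he, ← hij]
  · exact hne h
  · refine hp ⟨f j, (i - j).toNat, by omega, ?_⟩
    rw [hiter]
    have he : j + ((i - j).toNat : ℤ) = i := by omega
    rw [he, hij]

lemma hasDR_map {α β φ : X → X} (hs : ∀ x, φ (α x) = β (φ x)) (hpb : ¬HasPer β)
    (h : HasDR α) : HasDR β := by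
  obtain ⟨f, -, hstep⟩ := h
  have hstep' : ∀ i, β (φ (f i)) = φ (f (i + 1)) := fun i => by rw [← hs, hstep]
  exact ⟨fun i => φ (f i), inj_of_step hpb fun i => hstep' i, fun i => hstep' i⟩

/-! ### Well-foundedness -/

lemma wf_of_noPer_noDR {α : X → X} (hp : ¬HasPer α) (hd : ¬HasDR α) :
    WellFounded (fun y z : X => α y = z) := by
  by_contra hwf
  have hx : ∃ x : X, ¬Acc (fun y z : X => α y = z) x := by
    by_contra h
    push_neg at h
    exact hwf ⟨h⟩
  obtain ⟨x, hx⟩ := hx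
  have step : ∀ w : X, ¬Acc (fun y z : X => α y = z) w →
      ∃ y, α y = w ∧ ¬Acc (fun y z : X => α y = z) y := by
    intro w hw
    by_contra h
    push_neg at h
    exact hw (Acc.intro w fun y hy => h y hy)
  let T := {w : X // ¬Acc (fun y z : X => α y = z) w}
  let F : T → T := fun w => ⟨(step w.1 w.2).choose, (step w.1 w.2).choose_spec.2⟩
  have hF : ∀ w : T, α (F w).val = w.val := fun w => (step w.1 w.2).choose_spec.1
  let z : ℕ → X := fun n => (F^[n] ⟨x, hx⟩).val
  have hz : ∀ n, α (z (n + 1)) = z n := by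
    intro n
    show α ((F^[n + 1] ⟨x, hx⟩).val) = (F^[n] ⟨x, hx⟩).val
    rw [Function.iterate_succ_apply']
    exact hF _
  apply hd
  refine ⟨fun i => if 0 ≤ i then α^[i.toNat] x else z (-i).toNat, ?_, ?_⟩
  · apply inj_of_step hp
    intro i
    by_cases h : 0 ≤ i
    · have h1 : 0 ≤ i + 1 := by omega
      simp only [if_pos h, if_pos h1]
      rw [← Function.iterate_succ_apply' α]
      congr 1
      omega
    · by_cases h1 : 0 ≤ i + 1
      · have hi : i = -1 := by omega
        subst hi
        simp only [if_neg h, if_pos h1]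
        norm_num
        have : α (z 1) = z 0 := hz 0
        rw [this]
        rfl
      · simp only [if_neg h, if_neg h1]
        have he : (-i).toNat = (-(i + 1)).toNat + 1 := by omega
        rw [he]
        exact hz _
  · intro i
    by_cases h : 0 ≤ i
    · have h1 : 0 ≤ i + 1 := by omega
      simp only [if_pos h, if_pos h1]
      rw [← Function.iterate_succ_apply' α]
      congr 1
      omega
    · by_cases h1 : 0 ≤ i + 1
      · have hi : i = -1 := by omega
        subst hi
        simp only [if_neg h, if_pos h1]
        norm_num
        have : α (z 1) = z 0 := hz 0
        rw [this]
        rfl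
      · simp only [if_neg h, if_neg h1]
        have he : (-i).toNat = (-(i + 1)).toNat + 1 := by omega
        rw [he]
        exact hz _

/-! ### Rank lemmas -/

lemma frank_eq {α : X → X} (h : WellFounded (fun y z : X => α y = z)) (x : X) :
    frank α x = (h.apply x).rank := dif_pos h

lemma frank_lt {α : X → X} (h : WellFounded (fun y z : X => α y = z)) (x : X) :
    frank α x < frank α (α x) := by
  rw [frank_eq h, frank_eq h]
  exact Acc.rank_lt_of_rel (h.apply (α x)) rfl

lemma frank_pred {β : X → X} (h : WellFounded (fun y z : X => β y = z)) {v : X}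
    {c : Ordinal} (hc : c < frank β v) : ∃ w, β w = v ∧ c ≤ frank β w := by
  rw [frank_eq h, Acc.rank_eq] at hc
  rw [Ordinal.lt_iSup_iff] at hc
  obtain ⟨⟨w, hw⟩, hcw⟩ := hc
  refine ⟨w, hw, ?_⟩
  rw [frank_eq h]
  exact Order.lt_succ_iff.mp hcw

lemma frank_mono {α β φ : X → X} (ha : WellFounded (fun y z : X => α y = z))
    (hb : WellFounded (fun y z : X => β y = z)) (hs : ∀ x, φ (α x) = β (φ x)) (x : X) :
    frank α x ≤ frank β (φ x) := by
  refine ha.induction (C := fun x => frank α x ≤ frank β (φ x)) x ?_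
  intro x IH
  rw [frank_eq ha, Acc.rank_eq]
  refine Ordinal.iSup_le ?_
  rintro ⟨y, hy⟩
  rw [Order.succ_le_iff]
  have h1 : frank α y ≤ frank β (φ y) := IH y hy
  have h2 : frank β (φ y) < frank β (φ x) := by
    have := frank_lt hb (φ y)
    rwa [← hs y, hy] at this
  have e : ((ha.apply x).inv hy).rank = frank α y := (frank_eq ha y).symm
  rw [e]
  exact lt_of_le_of_lt h1 h2

/-! ### Chains and maximal right rays -/

lemma exists_chain {α : X → X} (h : WellFounded (fun y z : X => α y = z)) (x : X) :
    ∃ (k : ℕ) (u : X), α^[k] u = x ∧ u ∉ Set.range α := by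
  refine h.induction (C := fun x => ∃ (k : ℕ) (u : X), α^[k] u = x ∧ u ∉ Set.range α) x ?_
  intro x IH
  by_cases hx : x ∈ Set.range α
  · obtain ⟨y, hy⟩ := hx
    obtain ⟨k, u, hk, hu⟩ := IH y hy
    exact ⟨k + 1, u, by rw [Function.iterate_succ_apply', hk, hy], hu⟩
  · exact ⟨0, x, rfl, hx⟩

lemma isMRR_orbit {α : X → X} (hp : ¬HasPer α) {u x0 : X} (hu : u ∉ Set.range α)
    (hr : relT α u x0) : IsMRR α {y | relT α y x0} (fun n => α^[n] u) := by
  refine ⟨?_, ?_, ?_, ?_⟩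
  · intro a b hab
    exact orbit_inj hp hab
  · intro n
    exact relT_trans ⟨0, n, by simp⟩ hr
  · intro n
    exact (Function.iterate_succ_apply' α n u).symm
  · simpa using hu

lemma mrr_iter {α : X → X} {f : ℕ → X} (hstep : ∀ n, α (f n) = f (n + 1)) (b : ℕ) :
    α^[b] (f 0) = f b := by
  induction b with
  | zero => simp
  | succ b ih => rw [Function.iterate_succ_apply', ih, hstep]

/-! ### Case 3, forward direction -/

lemma case3_forward {α β φ : X → X} (hs : ∀ x, φ (α x) = β (φ x))
    (hpa : ¬HasPer α) (hpb : ¬HasPer β) (hda : ¬HasDR α) (hdb : ¬HasDR β)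
    {Y : Set X} (hY : IsClass α Y) :
    ∃ Z, IsClass β Z ∧ ∃ f g : ℕ → X, IsMRR α Y f ∧ IsMRR β Z g ∧
      Dominates (fun n => frank β (g n)) (fun n => frank α (f n)) := by
  have wfa := wf_of_noPer_noDR hpa hda
  have wfb := wf_of_noPer_noDR hpb hdb
  obtain ⟨x0, rfl⟩ := hY
  obtain ⟨k1, u, hku, hu⟩ := exists_chain wfa x0
  have hru : relT α u x0 := ⟨k1, 0, by simpa using hku⟩
  obtain ⟨k, v, hkv, hv⟩ := exists_chain wfb (φ u)
  have hrv : relT β v (φ x0) :=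
    relT_trans ⟨k, 0, by simpa using hkv⟩ (relT_map hs hru)
  refine ⟨{y | relT β y (φ x0)}, ⟨φ x0, rfl⟩, fun n => α^[n] u, fun n => β^[n] v,
    isMRR_orbit hpa hu hru, isMRR_orbit hpb hv hrv, k, fun n => ?_⟩
  show frank α (α^[n] u) ≤ frank β (β^[k + n] v)
  have he : β^[k + n] v = φ (α^[n] u) := by
    rw [add_comm, Function.iterate_add_apply, hkv, ← semiconj_iterate hs]
  rw [he]
  exact frank_mono wfa wfb hs _

end Lemmas

section Backward

variable {X : Type*}

/-! ### Phase computations -/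

lemma phase_eq {α : X → X} {b x : X} {p q p' q' : ℕ}
    (h1 : α^[p] x = α^[q] b) (h2 : α^[p'] x = α^[q'] b) :
    α^[p' + q] b = α^[p + q'] b := by
  have e1 : α^[p' + p] x = α^[p' + q] b := by
    rw [Function.iterate_add_apply, h1, ← Function.iterate_add_apply]
  have e2 : α^[p + p'] x = α^[p + q'] b := by
    rw [Function.iterate_add_apply, h2, ← Function.iterate_add_apply]
  rw [add_comm p' p] at e1
  exact e1.symm.trans e2

lemma iterate_eq_of_modEq {β : X → X} {z : X} {N a b : ℕ} (hz : β^[N] z = z)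
    (h : a ≡ b [MOD N]) : β^[a] z = β^[b] z := by
  have key : ∀ t : ℕ, β^[t] z = β^[t % N] z := by
    intro t
    conv_lhs => rw [← Nat.mod_add_div t N]
    rw [Function.iterate_add_apply, Function.iterate_mul, Function.iterate_fixed hz]
  rw [key a, key b, show a % N = b % N from h]

/-! ### Backward direction, case 2 -/

lemma semiconj_of_dr {α β : X → X} (hpa : ¬HasPer α) (hdb : HasDR β) :
    ∃ φ : X → X, ∀ x, φ (α x) = β (φ x) := by
  obtain ⟨g, -, hg⟩ := hdb
  have hBB : ∀ Y : Set X, ∃ b : X, IsClass α Y → b ∈ Y := by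
    intro Y
    by_cases h : IsClass α Y
    · obtain ⟨x0, rfl⟩ := h
      exact ⟨x0, fun _ => relT_refl α x0⟩
    · exact ⟨g 0, fun hY => absurd hY h⟩
  choose BB hBB using hBB
  have hrelB : ∀ x : X, ∃ km : ℕ × ℕ, α^[km.1] x = α^[km.2] (BB (Cset α x)) := by
    intro x
    obtain ⟨k, m, h⟩ := relT_symm (hBB (Cset α x) (isClass_Cset α x))
    exact ⟨(k, m), h⟩
  choose km hkm using hrelB
  refine ⟨fun x => g (((km x).2 : ℤ) - ((km x).1 : ℤ)), fun x => ?_⟩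
  have hC : Cset α (α x) = Cset α x := Cset_step α x
  have h1 : α^[(km x).1] x = α^[(km x).2] (BB (Cset α x)) := hkm x
  have h2 : α^[(km (α x)).1 + 1] x = α^[(km (α x)).2] (BB (Cset α x)) := by
    have h := hkm (α x)
    rw [hC, ← Function.iterate_succ_apply] at h
    exact h
  have hph := phase_eq h2 h1
  have key : (km x).1 + (km (α x)).2 = (km (α x)).1 + 1 + (km x).2 :=
    orbit_inj hpa hph
  have hgoal : ((km (α x)).2 : ℤ) - ((km (α x)).1 : ℤ) =
      (((km x).2 : ℤ) - ((km x).1 : ℤ)) + 1 := by omega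
  show g (((km (α x)).2 : ℤ) - ((km (α x)).1 : ℤ)) =
    β (g (((km x).2 : ℤ) - ((km x).1 : ℤ)))
  rw [hgoal, ← hg]

/-! ### Backward direction, case 1 -/

lemma semiconj_of_per {α β : X → X} (hb : HasPer β)
    (hM : ∀ n ∈ MT α, ∃ d ∈ MT β, d ∣ n) :
    ∃ φ : X → X, ∀ x, φ (α x) = β (φ x) := by
  obtain ⟨z0, d0, hd0, hz0⟩ := hb
  have claim : ∀ Y : Set X, ∃ (N : ℕ) (b z : X), 1 ≤ N ∧ (IsClass α Y →
      b ∈ Y ∧ β^[N] z = z ∧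
      ∀ a c : ℕ, α^[a] b = α^[c] b → (a : ZMod N) = (c : ZMod N)) := by
    intro Y
    by_cases hY : IsClass α Y
    · obtain ⟨x0, rfl⟩ := hY
      by_cases hper : ∃ p, relT α p x0 ∧ ∃ m, 1 ≤ m ∧ α^[m] p = p
      · obtain ⟨p, hp, m, hm1, hm⟩ := hper
        have hmP : Function.IsPeriodicPt α m p := hm
        have hperiodic : p ∈ Function.periodicPts α :=
          Function.mk_mem_periodicPts (by omega) hmP
        set n := Function.minimalPeriod α p with hn
        have hpp : Function.IsPeriodicPt α n p := Function.isPeriodicPt_minimalPeriod α p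
        have hn1 : 0 < n := Function.IsPeriodicPt.minimalPeriod_pos (by omega) hmP
        have hnM : n ∈ MT α := by
          refine ⟨by omega, p, hpp, ?_⟩
          intro i hi1 hin hip
          have : n ≤ i := Function.IsPeriodicPt.minimalPeriod_le (by omega) hip
          omega
        obtain ⟨d, hdM, hdn⟩ := hM n hnM
        obtain ⟨hd1, z, hz, -⟩ := hdM
        refine ⟨n, p, z, by omega, fun _ => ⟨hp, ?_, ?_⟩⟩
        · obtain ⟨t, ht⟩ := hdn
          rw [ht, Function.iterate_mul]
          exact Function.iterate_fixed hz t
        · have aux : ∀ a c : ℕ, a ≤ c → α^[a] p = α^[c] p → (a : ZMod n) = (c : ZMod n) := by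
            intro a c hac h
            have hs : Function.IsPeriodicPt α (c - a) (α^[a] p) := by
              show α^[c - a] (α^[a] p) = α^[a] p
              rw [← Function.iterate_add_apply]
              have : c - a + a = c := by omega
              rw [this, ← h]
            have hdvd : n ∣ c - a := by
              have := hs.minimalPeriod_dvd
              rwa [Function.minimalPeriod_apply_iterate hperiodic] at this
            have : ((c - a : ℕ) : ZMod n) = 0 := by
              haveI : NeZero n := ⟨by omega⟩
              rw [ZMod.natCast_eq_zero_iff]
              exact hdvd
            have hco : c = a + (c - a) := by omega
            rw [hco]
            push_cast
            rw [this]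
            ring
          intro a c h
          rcases le_total a c with hac | hac
          · exact aux a c hac h
          · exact (aux c a hac h.symm).symm
      · refine ⟨d0, x0, z0, hd0, fun _ => ⟨relT_refl α x0, hz0, ?_⟩⟩
        intro a c h
        have : a = c := by
          by_contra hne
          rcases lt_trichotomy a c with hac | hac | hac
          · refine hper ⟨α^[a] x0, ⟨0, a, by simp⟩, c - a, by omega, ?_⟩
            rw [← Function.iterate_add_apply]
            have : c - a + a = c := by omega
            rw [this, ← h]
          · exact hne hac
          · refine hper ⟨α^[c] x0, ⟨0, c, by simp⟩, a - c, by omega, ?_⟩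
            rw [← Function.iterate_add_apply]
            have : a - c + c = a := by omega
            rw [this, h]
        rw [this]
    · exact ⟨1, z0, z0, le_refl 1, fun h => absurd h hY⟩
  choose NN BB ZZ hN1 hprops using claim
  have hrelB : ∀ x : X, ∃ km : ℕ × ℕ, α^[km.1] x = α^[km.2] (BB (Cset α x)) := by
    intro x
    obtain ⟨k, m, h⟩ := relT_symm ((hprops (Cset α x) (isClass_Cset α x)).1)
    exact ⟨(k, m), h⟩
  choose km hkm using hrelB
  refine ⟨fun x => β^[((((km x).2 : ZMod (NN (Cset α x))) -
    ((km x).1 : ZMod (NN (Cset α x)))).val)] (ZZ (Cset α x)), fun x => ?_⟩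
  have hC : Cset α (α x) = Cset α x := Cset_step α x
  show β^[((((km (α x)).2 : ZMod (NN (Cset α (α x)))) -
      ((km (α x)).1 : ZMod (NN (Cset α (α x))))).val)] (ZZ (Cset α (α x))) =
    β (β^[((((km x).2 : ZMod (NN (Cset α x))) -
      ((km x).1 : ZMod (NN (Cset α x)))).val)] (ZZ (Cset α x)))
  rw [hC]
  obtain ⟨hbmem, hz, hQ⟩ := hprops (Cset α x) (isClass_Cset α x)
  have hN : 1 ≤ NN (Cset α x) := hN1 (Cset α x)
  haveI : NeZero (NN (Cset α x)) := ⟨by omega⟩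
  have h1 : α^[(km x).1] x = α^[(km x).2] (BB (Cset α x)) := hkm x
  have h2 : α^[(km (α x)).1 + 1] x = α^[(km (α x)).2] (BB (Cset α x)) := by
    have h := hkm (α x)
    rw [hC, ← Function.iterate_succ_apply] at h
    exact h
  have hph := phase_eq h2 h1
  have key : (((km x).1 + (km (α x)).2 : ℕ) : ZMod (NN (Cset α x))) =
      (((km (α x)).1 + 1 + (km x).2 : ℕ) : ZMod (NN (Cset α x))) := hQ _ _ hph
  have hdiff : ((km (α x)).2 : ZMod (NN (Cset α x))) - ((km (α x)).1 : ZMod (NN (Cset α x))) =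
      (((km x).2 : ZMod (NN (Cset α x))) - ((km x).1 : ZMod (NN (Cset α x)))) + 1 := by
    push_cast at key
    linear_combination key
  rw [hdiff, ← Function.iterate_succ_apply' β]
  have hv : ∀ c : ZMod (NN (Cset α x)), ((c.val : ℕ) : ZMod (NN (Cset α x))) = c := by
    intro c
    rw [ZMod.natCast_val, ZMod.cast_id]
  apply iterate_eq_of_modEq hz
  rw [← ZMod.natCast_eq_natCast_iff]
  push_cast
  rw [hv, hv]

end Backward

section Dom

variable {X : Type*}

/-! ### Backward direction, case 3: the recursive construction -/

noncomputable def V0 (α : X → X) (F G : Set X → ℕ → X) (K : Set X → ℕ) (x : X) : X :=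
  if h : ∃ n, F (Cset α x) n = x then G (Cset α x) (K (Cset α x) + h.choose) else x

noncomputable def Vs (α β : X → X) (Vj : X → X) (x : X) : X :=
  if h : ∃ w, β w = Vj (α x) ∧ frank α x ≤ frank β w then h.choose else x

noncomputable def Vit (α β : X → X) (F G : Set X → ℕ → X) (K : Set X → ℕ) : ℕ → X → X
  | 0 => V0 α F G K
  | j + 1 => Vs α β (Vit α β F G K j)

lemma V0_eq {α : X → X} {F G : Set X → ℕ → X} {K : Set X → ℕ} {x : X} {n : ℕ}
    (hinj : Function.Injective (F (Cset α x))) (hn : F (Cset α x) n = x) :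
    V0 α F G K x = G (Cset α x) (K (Cset α x) + n) := by
  have he : ∃ m, F (Cset α x) m = x := ⟨n, hn⟩
  have hc : he.choose = n := hinj (he.choose_spec.trans hn.symm)
  simp only [V0]
  rw [dif_pos he, hc]

lemma Vit_succ_spec {α β : X → X} {F G : Set X → ℕ → X} {K : Set X → ℕ} {j : ℕ} {x : X}
    (hw : ∃ w, β w = Vit α β F G K j (α x) ∧ frank α x ≤ frank β w) :
    β (Vit α β F G K (j + 1) x) = Vit α β F G K j (α x) ∧
      frank α x ≤ frank β (Vit α β F G K (j + 1) x) := by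
  have he : Vit α β F G K (j + 1) x = Vs α β (Vit α β F G K j) x := rfl
  rw [he]
  simp only [Vs]
  rw [dif_pos hw]
  exact hw.choose_spec

lemma semiconj_of_dom [Nonempty X] {α β : X → X}
    (hpa : ¬HasPer α) (hpb : ¬HasPer β) (hda : ¬HasDR α) (hdb : ¬HasDR β)
    (H : ∀ Y, IsClass α Y → ∃ Z, IsClass β Z ∧ ∃ f g : ℕ → X,
        IsMRR α Y f ∧ IsMRR β Z g ∧
        Dominates (fun n => frank β (g n)) (fun n => frank α (f n))) :
    ∃ φ : X → X, ∀ x, φ (α x) = β (φ x) := by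
  classical
  have wfa := wf_of_noPer_noDR hpa hda
  have wfb := wf_of_noPer_noDR hpb hdb
  have H' : ∀ Y : Set X, ∃ (f g : ℕ → X) (k : ℕ), IsClass α Y →
      IsMRR α Y f ∧ (∀ n, β (g n) = g (n + 1)) ∧
      ∀ n, frank α (f n) ≤ frank β (g (k + n)) := by
    intro Y
    by_cases h : IsClass α Y
    · obtain ⟨Z, hZ, f, g, hf, hg, hdom⟩ := H Y h
      obtain ⟨k, hk⟩ := hdom
      exact ⟨f, g, k, fun _ => ⟨hf, hg.2.2.1, fun n => hk n⟩⟩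
    · exact ⟨fun _ => Classical.arbitrary X, fun _ => Classical.arbitrary X, 0,
        fun hY => absurd hY h⟩
  choose F G K hFGK using H'
  have hclass : ∀ x : X, IsClass α (Cset α x) := fun x => isClass_Cset α x
  have hF : ∀ x : X, IsMRR α (Cset α x) (F (Cset α x)) := fun x => (hFGK _ (hclass x)).1
  have hG : ∀ (x : X) (n : ℕ), β (G (Cset α x) n) = G (Cset α x) (n + 1) :=
    fun x => (hFGK _ (hclass x)).2.1
  have hD : ∀ (x : X) (n : ℕ), frank α (F (Cset α x) n) ≤
      frank β (G (Cset α x) (K (Cset α x) + n)) := fun x => (hFGK _ (hclass x)).2.2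
  have hmerge : ∀ x : X, ∃ j, ∃ n, α^[j] x = F (Cset α x) n := by
    intro x
    have h0 : F (Cset α x) 0 ∈ Cset α x := (hF x).2.1 0
    obtain ⟨a, b, hab⟩ := relT_symm h0
    exact ⟨a, b, hab.trans (mrr_iter (hF x).2.2.1 b)⟩
  have hJfind : ∀ x, ∃ n, α^[Nat.find (hmerge x)] x = F (Cset α x) n :=
    fun x => Nat.find_spec (hmerge x)
  have hCs : ∀ x : X, Cset α (α x) = Cset α x := fun x => Cset_step α x
  have hJstep : ∀ x j, Nat.find (hmerge x) = j + 1 → Nat.find (hmerge (α x)) = j := by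
    intro x j hj
    rw [Nat.find_eq_iff] at hj ⊢
    obtain ⟨⟨n, hn⟩, hmin⟩ := hj
    constructor
    · refine ⟨n, ?_⟩
      rw [hCs x, ← Function.iterate_succ_apply]
      exact hn
    · intro i hij h'
      obtain ⟨n', hn'⟩ := h'
      refine hmin (i + 1) (by omega) ⟨n', ?_⟩
      rw [Function.iterate_succ_apply]
      rwa [hCs x] at hn'
  have hinv : ∀ j x, Nat.find (hmerge x) = j →
      frank α x ≤ frank β (Vit α β F G K j x) := by
    intro j
    induction j with
    | zero =>
      intro x hx
      obtain ⟨n, hn⟩ := hJfind x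
      rw [hx, Function.iterate_zero_apply] at hn
      rw [show Vit α β F G K 0 x = V0 α F G K x from rfl, V0_eq (hF x).1 hn.symm]
      calc frank α x = frank α (F (Cset α x) n) := by rw [← hn]
        _ ≤ _ := hD x n
    | succ j IH =>
      intro x hx
      have hJα := hJstep x j hx
      have h1 : frank α (α x) ≤ frank β (Vit α β F G K j (α x)) := IH (α x) hJα
      have h2 : frank α x < frank β (Vit α β F G K j (α x)) :=
        lt_of_lt_of_le (frank_lt wfa x) h1
      obtain ⟨w, hw1, hw2⟩ := frank_pred wfb h2
      exact (Vit_succ_spec ⟨w, hw1, hw2⟩).2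
  refine ⟨fun x => Vit α β F G K (Nat.find (hmerge x)) x, fun x => ?_⟩
  show Vit α β F G K (Nat.find (hmerge (α x))) (α x) =
    β (Vit α β F G K (Nat.find (hmerge x)) x)
  cases hj : Nat.find (hmerge x) with
  | zero =>
    obtain ⟨n, hn⟩ := hJfind x
    rw [hj, Function.iterate_zero_apply] at hn
    have hinj := (hF x).1
    have hstep := (hF x).2.2.1
    have hax : F (Cset α x) (n + 1) = α x := by
      rw [← hstep n, ← hn]
    have hj0 : Nat.find (hmerge (α x)) = 0 := by
      rw [Nat.find_eq_zero]
      refine ⟨n + 1, ?_⟩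
      rw [Function.iterate_zero_apply, hCs x]
      exact hax.symm
    have hinj' : Function.Injective (F (Cset α (α x))) := by rw [hCs x]; exact hinj
    have hax' : F (Cset α (α x)) (n + 1) = α x := by rw [hCs x]; exact hax
    rw [hj0, show Vit α β F G K 0 (α x) = V0 α F G K (α x) from rfl,
      show Vit α β F G K 0 x = V0 α F G K x from rfl,
      V0_eq hinj' hax', V0_eq hinj hn.symm, hCs x, hG x]
    have he : K (Cset α x) + (n + 1) = K (Cset α x) + n + 1 := by omega
    rw [he]
  | succ j =>
    have hJα := hJstep x j hj
    have h1 : frank α (α x) ≤ frank β (Vit α β F G K j (α x)) := hinv j (α x) hJα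
    have h2 : frank α x < frank β (Vit α β F G K j (α x)) :=
      lt_of_lt_of_le (frank_lt wfa x) h1
    obtain ⟨w, hw1, hw2⟩ := frank_pred wfb h2
    rw [hJα]
    exact (Vit_succ_spec ⟨w, hw1, hw2⟩).1.symm

end Dom

/-- Theorem 6.1. For full transformations `α, β` of a nonempty set
`X`, `α ~c β` in `T(X)` iff exactly one of the following holds:
(1) both have a periodic point and `cs(α) = cs(β)`;
(2) both have a double ray but no periodic point;
(3) neither has a periodic point or a double ray, and the ranks along maximal right
rays of components dominate each other in both directions. -/
theorem conjT_iff (X : Type*) [Nonempty X] (α β : X → X) :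
    ConjT α β ↔
      (HasPer α ∧ HasPer β ∧ csT α = csT β) ∨
      (HasDR α ∧ HasDR β ∧ ¬HasPer α ∧ ¬HasPer β) ∨
      (¬HasPer α ∧ ¬HasPer β ∧ ¬HasDR α ∧ ¬HasDR β ∧
        (∀ Y, IsClass α Y → ∃ Z, IsClass β Z ∧ ∃ f g : ℕ → X,
          IsMRR α Y f ∧ IsMRR β Z g ∧
          Dominates (fun n => frank β (g n)) (fun n => frank α (f n))) ∧
        (∀ Z, IsClass β Z → ∃ Y, IsClass α Y ∧ ∃ g f : ℕ → X,
          IsMRR β Z g ∧ IsMRR α Y f ∧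
          Dominates (fun n => frank α (f n)) (fun n => frank β (g n)))) := by
  constructor
  · rintro ⟨φ, ψ, hφ, hψ⟩
    have hφ' : ∀ x, φ (α x) = β (φ x) := fun x => congrFun hφ x
    have hψ' : ∀ x, ψ (β x) = α (ψ x) := fun x => congrFun hψ x
    by_cases hpa : HasPer α
    · exact Or.inl ⟨hpa, hasPer_map hφ' hpa, csT_eq (MT_transfer hφ') (MT_transfer hψ')⟩
    · have hpb : ¬HasPer β := fun h => hpa (hasPer_map hψ' h)
      by_cases hda : HasDR α
      · exact Or.inr (Or.inl ⟨hda, hasDR_map hφ' hpb hda, hpa, hpb⟩)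
      · have hdb : ¬HasDR β := fun h => hda (hasDR_map hψ' hpa h)
        exact Or.inr (Or.inr ⟨hpa, hpb, hda, hdb,
          fun Y hY => case3_forward hφ' hpa hpb hda hdb hY,
          fun Z hZ => case3_forward hψ' hpb hpa hdb hda hZ⟩)
  · rintro (⟨hpa, hpb, hcs⟩ | ⟨hda, hdb, hpa, hpb⟩ | ⟨hpa, hpb, hda, hdb, hab, hba⟩)
    · obtain ⟨φ, hφ⟩ := semiconj_of_per hpb (MT_div_of_cs hcs)
      obtain ⟨ψ, hψ⟩ := semiconj_of_per hpa (MT_div_of_cs hcs.symm)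
      exact ⟨φ, ψ, funext hφ, funext hψ⟩
    · obtain ⟨φ, hφ⟩ := semiconj_of_dr hpa hdb
      obtain ⟨ψ, hψ⟩ := semiconj_of_dr hpb hda
      exact ⟨φ, ψ, funext hφ, funext hψ⟩
    · obtain ⟨φ, hφ⟩ := semiconj_of_dom hpa hpb hda hdb hab
      obtain ⟨ψ, hψ⟩ := semiconj_of_dom hpb hpa hdb hda hba
      exact ⟨φ, ψ, funext hφ, funext hψ⟩

end ConjPaper
end
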